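/- Let x ∈ [0,∞) be such that T^k(x) ∉ ℤ for all k ∈ ℕ, and let (i_k)_{k∈ℕ} be its itinerary, i.e. the sequence of positive integers with T^k(x) ∈ (i_k − 1, i_k) for all k. If there is n ∈ ℕ such that i_{k+n+1} = i_k for all k ∈ ℕ, then T^{n+1}(x) = x. -/

import Mathlib

open Set Filter

noncomputable section

/-- `ell n = min {k ∈ ℤ⁺ : n ≤ 4^k}`. -/
def ell (n : ℕ) : ℕ := sInf {k : ℕ | 1 ≤ k ∧ n ≤ 4 ^ k}

/-- The value of the map `T` at the nonnegative integer `n`: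
`0` if `n` is even and `4 ^ ℓ(n) + 1` if `n` is odd. -/
def Tval (n : ℕ) : ℝ := if Even n then 0 else 4 ^ ell n + 1

/-- `T : [0,∞) → [0,∞)` is the unique continuous map which is affine on each
integer interval `[n-1, n]` and takes the value `Tval n` at every nonnegative
integer `n`.  This is expressed by linear interpolation on each `[n, n+1]`. -/
def IsT (T : ℝ → ℝ) : Prop :=
  ∀ n : ℕ, ∀ x ∈ Set.Icc (n : ℝ) (n + 1),
    T x = ((n : ℝ) + 1 - x) * Tval n + (x - (n : ℝ)) * Tval (n + 1)

/-- `(x_k)` is a `δ`-pseudo orbit of `T` in `[0,∞)`. -/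
def IsPseudoOrbit (T : ℝ → ℝ) (δ : ℝ) (x : ℕ → ℝ) : Prop :=
  (∀ k, 0 ≤ x k) ∧ ∀ k, |x (k + 1) - T (x k)| < δ

/-! On each interval `[m, m + 1]` the map `T` is affine with slope `±(4 ^ ℓ + 1)`, so it expands
distances by a factor at least `5` there. If the itinerary of `x` has period `n + 1`, then the
orbits of `x` and `y = T^[n+1] x` visit the same unit interval at every time, so
`5 ^ k * |x - y| ≤ |T^[k] x - T^[k] y| ≤ 1` for all `k`, which forces `x = y`. -/

theorem eq_of_forall_dist_iterate_le {α : Type*} [MetricSpace α] {f : α → α} {c B : ℝ}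
    (hc : 1 < c) {x y : α}
    (hexp : ∀ k, c * dist (f^[k] x) (f^[k] y) ≤ dist (f^[k + 1] x) (f^[k + 1] y))
    (hbdd : ∀ k, dist (f^[k] x) (f^[k] y) ≤ B) : x = y := by
  have hgrow : ∀ k, c ^ k * dist x y ≤ dist (f^[k] x) (f^[k] y) := by
    intro k
    induction k with
    | zero => simp
    | succ k ih =>
      calc c ^ (k + 1) * dist x y = c * (c ^ k * dist x y) := by ring
        _ ≤ c * dist (f^[k] x) (f^[k] y) := by gcongr
        _ ≤ _ := hexp k
  by_contra hxy
  have hpos := dist_pos.2 hxy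
  obtain ⟨k, hk⟩ := pow_unbounded_of_one_lt (B / dist x y) hc
  linarith [(div_lt_iff₀ hpos).1 hk, hgrow k, hbdd k]

theorem one_le_ell (m : ℕ) : 1 ≤ ell m := by
  have hne : {k : ℕ | 1 ≤ k ∧ m ≤ 4 ^ k}.Nonempty :=
    ⟨m + 1, by omega, by have := Nat.lt_pow_self (n := m + 1) (a := 4) (by norm_num); omega⟩
  exact (Nat.sInf_mem hne).1

theorem five_le_abs_Tval_succ_sub (m : ℕ) : 5 ≤ |Tval (m + 1) - Tval m| := by
  have h5 : ∀ j, (5 : ℝ) ≤ 4 ^ ell j + 1 := fun j => by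
    linarith [pow_le_pow_right₀ (by norm_num : (1 : ℝ) ≤ 4) (one_le_ell j), pow_one (4 : ℝ)]
  rcases Nat.even_or_odd m with hm | hm
  · have hm_succ : ¬Even (m + 1) := by simpa [Nat.even_add_one] using hm
    rw [Tval, Tval, if_pos hm, if_neg hm_succ, sub_zero, abs_of_nonneg (by positivity)]
    exact h5 _
  · have hm' : ¬Even m := Nat.not_even_iff_odd.mpr hm
    have hm_succ : Even (m + 1) := by simpa [Nat.even_add_one] using hm'
    rw [Tval, Tval, if_pos hm_succ, if_neg hm', zero_sub, abs_neg, abs_of_nonneg (by positivity)]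
    exact h5 _

namespace IsT

variable {T : ℝ → ℝ}

theorem sub_eq_mul (hT : IsT T) {m : ℕ} {a b : ℝ} (ha : a ∈ Icc (m : ℝ) (m + 1))
    (hb : b ∈ Icc (m : ℝ) (m + 1)) : T a - T b = (a - b) * (Tval (m + 1) - Tval m) := by
  rw [hT m a ha, hT m b hb]
  ring

theorem five_mul_dist_le (hT : IsT T) {m : ℕ} {a b : ℝ} (ha : a ∈ Icc (m : ℝ) (m + 1))
    (hb : b ∈ Icc (m : ℝ) (m + 1)) : 5 * dist a b ≤ dist (T a) (T b) := by
  rw [Real.dist_eq, Real.dist_eq, hT.sub_eq_mul ha hb, abs_mul, mul_comm]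
  exact mul_le_mul_of_nonneg_left (five_le_abs_Tval_succ_sub m) (abs_nonneg _)

end IsT

theorem periodic_itinerary_periodic_point_general (T : ℝ → ℝ) (hT : IsT T)
    (x : ℝ)
    (i : ℕ → ℕ)
    (hitin : ∀ k : ℕ, 1 ≤ i k ∧ T^[k] x ∈ Set.Ioo ((i k : ℝ) - 1) (i k))
    (n : ℕ) (hper : ∀ k : ℕ, i (k + n + 1) = i k) :
    T^[n + 1] x = x := by
  set y := T^[n + 1] x
  have hity : ∀ k, T^[k] y ∈ Ioo ((i k : ℝ) - 1) (i k) := fun k => by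
    rw [← Function.iterate_add_apply, ← hper k]
    exact (hitin (k + n + 1)).2
  have hsame : ∀ k, ∃ m : ℕ,
      T^[k] x ∈ Icc (m : ℝ) (m + 1) ∧ T^[k] y ∈ Icc (m : ℝ) (m + 1) := by
    intro k
    obtain ⟨m, hm⟩ := Nat.exists_eq_add_of_le' (hitin k).1
    have hI : Ioo ((i k : ℝ) - 1) (i k) ⊆ Icc (m : ℝ) (m + 1) := by
      rw [hm]; push_cast; simpa using Ioo_subset_Icc_self
    exact ⟨m, hI (hitin k).2, hI (hity k)⟩
  refine (eq_of_forall_dist_iterate_le (f := T) (c := 5) (B := 1) (by norm_num) (fun k => ?_)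
    (fun k => ?_)).symm
  · obtain ⟨m, hxk, hyk⟩ := hsame k
    simpa only [Function.iterate_succ_apply'] using hT.five_mul_dist_le hxk hyk
  · obtain ⟨m, hxk, hyk⟩ := hsame k
    simpa using Real.dist_le_of_mem_Icc hxk hyk

/-- If the itinerary of a point `x` (whose orbit never hits an integer) is
periodic with period `n + 1` for the shift, then `T^[n+1] x = x`. -/
theorem periodic_itinerary_periodic_point (T : ℝ → ℝ) (hT : IsT T)
    (x : ℝ) (hx0 : 0 ≤ x) (hnex : ∀ k : ℕ, ∀ m : ℤ, T^[k] x ≠ (m : ℝ))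
    (i : ℕ → ℕ)
    (hitin : ∀ k : ℕ, 1 ≤ i k ∧ T^[k] x ∈ Set.Ioo ((i k : ℝ) - 1) (i k))
    (n : ℕ) (hper : ∀ k : ℕ, i (k + n + 1) = i k) :
    T^[n + 1] x = x :=
  periodic_itinerary_periodic_point_general T hT x i hitin n hper
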